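/- arXiv:1902.10857 — 2 statements merged into one kernel-verified Lean document; each statement's English description precedes it below -/
import Mathlib

section
/- (Pełczyński selection principle) For every ε ∈ (0,1), every normalized weakly null sequence in an infinite-dimensional Banach space has a basic subsequence with basic constant at most 1 + ε. -/
/-!
Mazur's argument. Compactness of the unit sphere of a finite-dimensional subspace `E` gives
finitely many norm-one functionals that almost norm `E`; as `y` is weakly null, all of them are
small on some far-out `y k`, and then `‖x + a • y k‖ ≥ (1 - δ) ‖x‖` for all `x ∈ E` and all
scalars `a`. Choosing the subsequence one term at a time, with `E` the span of the terms chosen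
so far and errors `δ n` of total sum at most `ε / (1 + ε)`, the norms of the partial sums
`‖∑_{i<n} a i • y (φ i)‖` can decrease from `m` to `n` at most by the factor
`∏ (1 - δ j) ≥ 1 - ∑ δ j ≥ 1 / (1 + ε)`.
-/

open Filter Topology

theorem Submodule.exists_finset_almost_norming {X : Type*} [NormedAddCommGroup X]
    [NormedSpace ℝ X] (E : Submodule ℝ X) [FiniteDimensional ℝ E] {η : ℝ} (hη : 0 < η) :
    ∃ G : Finset (StrongDual ℝ X), (∀ g ∈ G, ‖g‖ ≤ 1) ∧
      ∀ x ∈ E, ∃ g ∈ G, (1 - η) * ‖x‖ ≤ g x := by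
  classical
  set S : Set X := Subtype.val '' Metric.sphere (0 : E) 1
  have hS : IsCompact S := (isCompact_sphere 0 1).image continuous_subtype_val
  obtain ⟨t, htS, htfin, hcover⟩ := hS.finite_cover_balls hη
  choose F hF1 hFnorm using fun c : X => exists_dual_vector'' ℝ c
  refine ⟨insert 0 (htfin.toFinset.image F), ?_, fun x hx => ?_⟩
  · simp only [Finset.mem_insert, Finset.mem_image]
    rintro g (rfl | ⟨c, -, rfl⟩)
    exacts [by simp, hF1 c]
  rcases eq_or_ne x 0 with rfl | hx0
  · exact ⟨0, Finset.mem_insert_self _ _, by simp⟩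
  have hxpos : 0 < ‖x‖ := norm_pos_iff.2 hx0
  set u : X := ‖x‖⁻¹ • x
  have hu1 : ‖u‖ = 1 := by rw [norm_smul, norm_inv, norm_norm, inv_mul_cancel₀ hxpos.ne']
  have huS : u ∈ S := ⟨⟨u, E.smul_mem _ hx⟩, by simpa using hu1, rfl⟩
  obtain ⟨c, hct, huc⟩ := Set.mem_iUnion₂.1 (hcover huS)
  have hc1 : ‖c‖ = 1 := by
    obtain ⟨c', hc', rfl⟩ := htS hct
    simpa using hc'
  have hFu : 1 - η ≤ F c u := by
    have hsmall : |F c (u - c)| ≤ ‖u - c‖ := by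
      simpa using (F c).le_of_opNorm_le (hF1 c) (u - c)
    have hdist : ‖u - c‖ < η := by rwa [← dist_eq_norm]
    have hFc : F c c = 1 := by simpa [hc1] using hFnorm c
    have hsplit : F c u = F c c + F c (u - c) := by simp
    rw [hsplit, hFc]
    linarith [neg_abs_le (F c (u - c))]
  refine ⟨F c, Finset.mem_insert_of_mem (Finset.mem_image_of_mem _ (htfin.mem_toFinset.2 hct)), ?_⟩
  have hFx : F c x = ‖x‖ * F c u := by
    simp only [u, map_smul, smul_eq_mul]
    field_simp
  rw [hFx, mul_comm]
  exact mul_le_mul_of_nonneg_left hFu hxpos.le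

theorem exists_ge_forall_mul_norm_le_norm_add_smul {X : Type*} [NormedAddCommGroup X]
    [NormedSpace ℝ X] (y : ℕ → X) (hnorm : ∀ n, ‖y n‖ = 1)
    (hweak : ∀ f : StrongDual ℝ X, Tendsto (fun n => f (y n)) atTop (𝓝 0))
    (E : Submodule ℝ X) [FiniteDimensional ℝ E] {δ : ℝ} (hδ : 0 < δ) (N : ℕ) :
    ∃ k, N ≤ k ∧ ∀ x ∈ E, ∀ a : ℝ, (1 - δ) * ‖x‖ ≤ ‖x + a • y k‖ := by
  obtain ⟨G, hG1, hGnorm⟩ := E.exists_finset_almost_norming (half_pos hδ)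
  have hsmall : ∀ᶠ k in atTop, N ≤ k ∧ ∀ g ∈ G, |g (y k)| < δ / 4 :=
    (eventually_ge_atTop N).and <| (eventually_all_finset G).2 fun g _ => by
      simpa using (hweak g).abs.eventually_lt_const (by rw [abs_zero]; positivity : |(0 : ℝ)| < δ / 4)
  obtain ⟨k, hNk, hk⟩ := hsmall.exists
  refine ⟨k, hNk, fun x hx a => ?_⟩
  obtain ⟨g, hgG, hgx⟩ := hGnorm x hx
  by_cases ha : |a| ≤ 2 * ‖x‖
  · -- `g` almost norms `x` and is too small on `y k` to cancel it
    have hgy : |a * g (y k)| ≤ 2 * ‖x‖ * (δ / 4) := by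
      rw [abs_mul]
      exact mul_le_mul ha (hk g hgG).le (abs_nonneg _) (by positivity)
    calc (1 - δ) * ‖x‖ ≤ g x + a * g (y k) := by linarith [neg_abs_le (a * g (y k))]
      _ = g (x + a • y k) := by simp
      _ ≤ ‖x + a • y k‖ := by
        simpa using (le_abs_self _).trans ((g.le_of_opNorm_le (hG1 g hgG)) (x + a • y k))
  · have hay : ‖a • y k‖ ≤ ‖x + a • y k‖ + ‖x‖ := by
      simpa using norm_sub_le (x + a • y k) x
    rw [norm_smul, hnorm, mul_one, Real.norm_eq_abs] at hay
    nlinarith [norm_nonneg x]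

theorem exists_strictMono_forall_image_range {P : ℕ → Finset ℕ → ℕ → Prop}
    (h : ∀ n s, ∃ k, (∀ j ∈ s, j < k) ∧ P n s k) :
    ∃ φ : ℕ → ℕ, StrictMono φ ∧ ∀ n, P n ((Finset.range n).image φ) (φ n) := by
  classical
  choose next hnext hP using h
  let S : ℕ → Finset ℕ := fun n => Nat.rec ∅ (fun n s => insert (next n s) s) n
  let φ : ℕ → ℕ := fun n => next n (S n)
  have hS : ∀ n, S n = (Finset.range n).image φ := by
    intro n
    induction n with
    | zero => rfl
    | succ n ih =>
      change insert (φ n) (S n) = _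
      rw [ih, Finset.range_add_one, Finset.image_insert]
  refine ⟨φ, strictMono_nat_of_lt_succ fun n => hnext (n + 1) (S (n + 1)) (φ n) ?_, fun n => ?_⟩
  · exact Finset.mem_insert_self _ _
  · rw [← hS]
    exact hP n (S n)

theorem exists_strictMono_mul_norm_sum_range_le {X : Type*} [NormedAddCommGroup X]
    [NormedSpace ℝ X] (y : ℕ → X) (hnorm : ∀ n, ‖y n‖ = 1)
    (hweak : ∀ f : StrongDual ℝ X, Tendsto (fun n => f (y n)) atTop (𝓝 0))
    {δ : ℕ → ℝ} (hδ : ∀ n, 0 < δ n) :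
    ∃ φ : ℕ → ℕ, StrictMono φ ∧ ∀ (a : ℕ → ℝ) n,
      (1 - δ n) * ‖∑ i ∈ Finset.range n, a i • y (φ i)‖ ≤
        ‖∑ i ∈ Finset.range (n + 1), a i • y (φ i)‖ := by
  classical
  have hnext : ∀ n (s : Finset ℕ), ∃ k, (∀ j ∈ s, j < k) ∧
      ∀ x ∈ Submodule.span ℝ (s.image y : Set X), ∀ b : ℝ, (1 - δ n) * ‖x‖ ≤ ‖x + b • y k‖ := by
    intro n s
    obtain ⟨k, hk, hx⟩ := exists_ge_forall_mul_norm_le_norm_add_smul y hnorm hweak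
      (Submodule.span ℝ (s.image y : Set X)) (hδ n) (s.sup id + 1)
    exact ⟨k, fun j hj => Nat.lt_of_lt_of_le (Nat.lt_succ_of_le (Finset.le_sup (f := id) hj)) hk,
      hx⟩
  obtain ⟨φ, hφ, hP⟩ := exists_strictMono_forall_image_range hnext
  refine ⟨φ, hφ, fun a n => ?_⟩
  rw [Finset.sum_range_succ]
  refine hP n _ (Submodule.sum_mem _ fun i hi => Submodule.smul_mem _ _ ?_) (a n)
  exact Submodule.subset_span (by simpa using ⟨i, Finset.mem_range.1 hi, rfl⟩)

theorem one_sub_sum_Ico_mul_le {g δ : ℕ → ℝ} (hδ0 : ∀ n, 0 ≤ δ n) (hδ1 : ∀ n, δ n ≤ 1)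
    (hstep : ∀ n, (1 - δ n) * g n ≤ g (n + 1)) {m n : ℕ} (hg : 0 ≤ g m) (hmn : m ≤ n) :
    (1 - ∑ j ∈ Finset.Ico m n, δ j) * g m ≤ g n := by
  induction n, hmn using Nat.le_induction with
  | base => simp
  | succ n hmn ih =>
    set s := ∑ j ∈ Finset.Ico m n, δ j
    have hs : 0 ≤ s := Finset.sum_nonneg fun j _ => hδ0 j
    rw [Finset.sum_Ico_succ_top hmn]
    calc (1 - (s + δ n)) * g m ≤ (1 - δ n) * ((1 - s) * g m) := by
          nlinarith [mul_nonneg (mul_nonneg (hδ0 n) hs) hg]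
      _ ≤ (1 - δ n) * g n := mul_le_mul_of_nonneg_left ih (sub_nonneg.2 (hδ1 n))
      _ ≤ g (n + 1) := hstep n

theorem pelczynski_selection_principle_general
    {X : Type*} [NormedAddCommGroup X] [NormedSpace ℝ X]
    (ε : ℝ) (hε : ε ∈ Set.Ioo (0 : ℝ) 1)
    (y : ℕ → X) (hnorm : ∀ n, ‖y n‖ = 1)
    (hweak : ∀ f : X →L[ℝ] ℝ, Tendsto (fun n => f (y n)) atTop (𝓝 0)) :
    ∃ φ : ℕ → ℕ, StrictMono φ ∧ ∀ m n, m ≤ n → ∀ a : ℕ → ℝ,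
      ‖∑ i ∈ Finset.range m, a i • y (φ i)‖ ≤
        (1 + ε) * ‖∑ i ∈ Finset.range n, a i • y (φ i)‖ := by
  have hε1 : 0 < 1 + ε := by linarith [hε.1]
  have ht : 0 < ε / (1 + ε) := div_pos hε.1 hε1
  obtain ⟨δ, hδ0, hδsum⟩ := (Set.countable_univ (α := ℕ)).exists_pos_forall_sum_le ht
  have hδ1 : ∀ j, δ j ≤ 1 := fun j => by
    have := hδsum {j} (Set.subset_univ _)
    rw [Finset.sum_singleton] at this
    exact this.trans ((div_le_one hε1).2 (by linarith))
  obtain ⟨φ, hφ, hstep⟩ := exists_strictMono_mul_norm_sum_range_le y hnorm hweak hδ0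
  refine ⟨φ, hφ, fun m n hmn a => ?_⟩
  have hdecay := one_sub_sum_Ico_mul_le (fun j => (hδ0 j).le) hδ1 (hstep a) (norm_nonneg _) hmn
  have hsum := hδsum (Finset.Ico m n) (Set.subset_univ _)
  calc ‖∑ i ∈ Finset.range m, a i • y (φ i)‖
      = (1 + ε) * ((1 - ε / (1 + ε)) * ‖∑ i ∈ Finset.range m, a i • y (φ i)‖) := by
        field_simp; ring
    _ ≤ (1 + ε) * ((1 - ∑ j ∈ Finset.Ico m n, δ j) * ‖∑ i ∈ Finset.range m, a i • y (φ i)‖) := by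
        gcongr
    _ ≤ (1 + ε) * ‖∑ i ∈ Finset.range n, a i • y (φ i)‖ := by gcongr

/-- Pełczyński selection principle. For every `ε ∈ (0,1)`, every
normalized weakly null sequence in an infinite-dimensional Banach space has a basic
subsequence with basic constant at most `1 + ε`. -/
theorem pelczynski_selection_principle
    {X : Type*} [NormedAddCommGroup X] [NormedSpace ℝ X] [CompleteSpace X]
    (hinf : ¬ FiniteDimensional ℝ X)
    (ε : ℝ) (hε : ε ∈ Set.Ioo (0 : ℝ) 1)
    (y : ℕ → X) (hnorm : ∀ n, ‖y n‖ = 1)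
    (hweak : ∀ f : X →L[ℝ] ℝ, Tendsto (fun n => f (y n)) atTop (𝓝 0)) :
    ∃ φ : ℕ → ℕ, StrictMono φ ∧ ∀ m n, m ≤ n → ∀ a : ℕ → ℝ,
      ‖∑ i ∈ Finset.range m, a i • y (φ i)‖ ≤
        (1 + ε) * ‖∑ i ∈ Finset.range n, a i • y (φ i)‖ :=
  pelczynski_selection_principle_general ε hε y hnorm hweak
end

section
/- (James non-distortion, used form) If X contains an isomorphic copy of ℓ¹, then for every ε > 0 there is a linear embedding T : ℓ¹ → X with ‖x‖₁ ≤ ‖Tx‖ ≤ (1+ε)‖x‖₁ for all x ∈ ℓ¹. -/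
/-!
Let `S : ℓ¹ → X` be bounded below and let `λₙ = tailInf S n` be the infimum of `‖S v‖` over
finitely supported unit vectors vanishing below `n`; let `Λ = sup λₙ > 0`. Given `r > 1`, fix
`n₀` with `Λ < r λₙ₀`. Beyond any index there is a finitely supported unit vector `u` with
`‖S u‖ < r Λ`, so there are successive disjointly supported such blocks `Uₖ` starting at `n₀`. Then
`B v = ∑ vₖ Uₖ` is an isometry of `ℓ¹` into the closure of the finitely supported vectors
vanishing below `n₀`, so `λₙ₀ ‖v‖ ≤ ‖S (B v)‖ ≤ r Λ ‖v‖ ≤ r² λₙ₀ ‖v‖`. Rescale by `λₙ₀⁻¹` and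
take `r = √(1 + ε)`.
-/

open Filter Topology

instance : Fact ((1 : ENNReal) ≤ 1) := ⟨le_rfl⟩

open Function Set
open scoped lp

namespace lp

variable {α : Type*} {E : α → Type*} [∀ i, NormedAddCommGroup (E i)]

theorem hasSum_norm_one (f : lp E 1) : HasSum (fun i => ‖f i‖) ‖f‖ := by
  simpa using lp.hasSum_norm (p := 1) (by norm_num) f

instance [Nonempty α] [∀ i, Nontrivial (E i)] {p : ENNReal} : Nontrivial (lp E p) := by
  classical
  obtain ⟨a, ha⟩ := exists_ne (0 : E (Classical.arbitrary α))
  exact nontrivial_of_ne (lp.single p _ a) 0 fun h => ha <| by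
    simpa using congrArg (fun f : lp E p => f (Classical.arbitrary α)) h

theorem norm_add_of_disjoint {f g : lp E 1} (h : ∀ i, f i = 0 ∨ g i = 0) :
    ‖f + g‖ = ‖f‖ + ‖g‖ := by
  refine (hasSum_norm_one (f + g)).unique ?_
  convert (hasSum_norm_one f).add (hasSum_norm_one g) using 1
  funext i
  rcases h i with h | h <;> simp [h]

end lp

section Lift

variable {Z : Type*} [NormedAddCommGroup Z] [NormedSpace ℝ Z] {x : ℕ → Z} {C : ℝ}

theorem norm_le_of_hasSum_smul (hx : ∀ k, ‖x k‖ ≤ C) {v : ℓ¹(ℕ, ℝ)} {a : Z}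
    (h : HasSum (fun k => v k • x k) a) : ‖a‖ ≤ C * ‖v‖ := by
  refine h.norm_le_of_bounded ((lp.hasSum_norm_one v).mul_left C) fun k => ?_
  rw [norm_smul, mul_comm]
  exact mul_le_mul_of_nonneg_right (hx k) (norm_nonneg _)

variable [CompleteSpace Z]

noncomputable def l1Lift (x : ℕ → Z) (hC : 0 ≤ C) (hx : ∀ k, ‖x k‖ ≤ C) :
    ℓ¹(ℕ, ℝ) →L[ℝ] Z :=
  lp.tsumCLM ℝ ℕ Z ∘L
    lp.mapCLM 1 (fun k => ContinuousLinearMap.toSpanSingleton ℝ (x k)) hC (by simpa using hx)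

theorem hasSum_l1Lift (hC : 0 ≤ C) (hx : ∀ k, ‖x k‖ ≤ C) (v : ℓ¹(ℕ, ℝ)) :
    HasSum (fun k => v k • x k) (l1Lift x hC hx v) := by
  set w := lp.mapCLM 1 (fun k => ContinuousLinearMap.toSpanSingleton ℝ (x k)) hC
    (by simpa using hx) v
  have hw : ⇑w = fun k => v k • x k := funext fun k => by simp [w]
  rw [← hw]
  exact (lp.hasSum_norm_one w).summable.of_norm.hasSum

end Lift

def unitTail (n : ℕ) : Set ℓ¹(ℕ, ℝ) := {v | ‖v‖ = 1 ∧ ∃ M, support ⇑v ⊆ Ico n M}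

structure IsNormalizedBlockSeq (N : ℕ → ℕ) (U : ℕ → ℓ¹(ℕ, ℝ)) : Prop where
  mono : Monotone N
  support_subset : ∀ k, support ⇑(U k) ⊆ Ico (N k) (N (k + 1))
  norm_eq_one : ∀ k, ‖U k‖ = 1

namespace IsNormalizedBlockSeq

variable {N : ℕ → ℕ} {U : ℕ → ℓ¹(ℕ, ℝ)}

theorem support_sum_subset (hB : IsNormalizedBlockSeq N U) (v : ℕ → ℝ) (K : ℕ) :
    support ⇑(∑ k ∈ Finset.range K, v k • U k) ⊆ Ico (N 0) (N K) := by
  induction K with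
  | zero => intro i hi; exact absurd rfl hi
  | succ K ih =>
    rw [Finset.sum_range_succ, lp.coeFn_add, lp.coeFn_smul,
      ← Ico_union_Ico_eq_Ico (hB.mono K.zero_le) (hB.mono K.le_succ)]
    exact (support_add _ _).trans <| union_subset_union ih <|
      (support_const_smul_subset _ _).trans (hB.support_subset K)

theorem norm_sum (hB : IsNormalizedBlockSeq N U) (v : ℕ → ℝ) (K : ℕ) :
    ‖∑ k ∈ Finset.range K, v k • U k‖ = ∑ k ∈ Finset.range K, ‖v k‖ := by
  induction K with
  | zero => simp
  | succ K ih =>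
    have hdisj : Disjoint (support ⇑(∑ k ∈ Finset.range K, v k • U k)) (support ⇑(v K • U K)) :=
      (Ico_disjoint_Ico_same.mono (hB.support_sum_subset v K) <|
        (support_const_smul_subset _ _).trans (hB.support_subset K))
    rw [Finset.sum_range_succ, Finset.sum_range_succ, lp.norm_add_of_disjoint, ih, norm_smul,
      hB.norm_eq_one, mul_one]
    exact fun i => or_iff_not_imp_left.2 fun hi => notMem_support.1 (disjoint_left.1 hdisj hi)

noncomputable def blockMap (hB : IsNormalizedBlockSeq N U) : ℓ¹(ℕ, ℝ) →L[ℝ] ℓ¹(ℕ, ℝ) :=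
  l1Lift U zero_le_one fun k => (hB.norm_eq_one k).le

theorem hasSum_blockMap (hB : IsNormalizedBlockSeq N U) (v : ℓ¹(ℕ, ℝ)) :
    HasSum (fun k => v k • U k) (hB.blockMap v) :=
  hasSum_l1Lift _ _ v

theorem norm_blockMap (hB : IsNormalizedBlockSeq N U) (v : ℓ¹(ℕ, ℝ)) :
    ‖hB.blockMap v‖ = ‖v‖ :=
  tendsto_nhds_unique ((hB.hasSum_blockMap v).tendsto_sum_nat.norm)
    (by simpa only [hB.norm_sum] using (lp.hasSum_norm_one v).tendsto_sum_nat)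

end IsNormalizedBlockSeq

theorem exists_isNormalizedBlockSeq {P : ℓ¹(ℕ, ℝ) → Prop} (h : ∀ m, ∃ u ∈ unitTail m, P u)
    (n₀ : ℕ) : ∃ N U, N 0 = n₀ ∧ IsNormalizedBlockSeq N U ∧ ∀ k, P (U k) := by
  choose u hu hP using h
  choose hu1 M hM using hu
  let N : ℕ → ℕ := fun k => Nat.rec n₀ (fun _ m => max m (M m)) k
  refine ⟨N, fun k => u (N k), rfl, ⟨monotone_nat_of_le_succ fun k => le_max_left _ _,
    fun k => (hM (N k)).trans (Ico_subset_Ico_right (le_max_right _ _)), fun k => hu1 _⟩,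
    fun k => hP _⟩

theorem unitTail_nonempty (n : ℕ) : (unitTail n).Nonempty := by
  refine ⟨lp.single 1 n 1, by simp [lp.norm_single], n + 1, fun i hi => ?_⟩
  obtain rfl : i = n := by simpa [lp.single_apply, Pi.single_apply] using hi
  simp

section TailInf

variable {X : Type*} [NormedAddCommGroup X] [NormedSpace ℝ X] (S : ℓ¹(ℕ, ℝ) →L[ℝ] X)

noncomputable def tailInf (n : ℕ) : ℝ :=
  sInf ((‖S ·‖) '' unitTail n)

theorem tailInf_image_bddBelow (n : ℕ) : BddBelow ((‖S ·‖) '' unitTail n) :=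
  ⟨0, forall_mem_image.2 fun _ _ => norm_nonneg _⟩

theorem tailInf_mul_norm_le {n M : ℕ} {v : ℓ¹(ℕ, ℝ)} (hv : support ⇑v ⊆ Ico n M) :
    tailInf S n * ‖v‖ ≤ ‖S v‖ := by
  rcases eq_or_ne v 0 with rfl | hv0
  · simp
  have hpos : 0 < ‖v‖ := norm_pos_iff.2 hv0
  have hunit : ‖v‖⁻¹ • v ∈ unitTail n :=
    ⟨by rw [norm_smul, norm_inv, norm_norm, inv_mul_cancel₀ hpos.ne'],
      M, by rw [lp.coeFn_smul]; exact (support_const_smul_subset _ _).trans hv⟩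
  have := csInf_le (tailInf_image_bddBelow S n) (mem_image_of_mem _ hunit)
  rw [map_smul, norm_smul, norm_inv, norm_norm] at this
  rwa [← le_div_iff₀ hpos, div_eq_inv_mul]

theorem tailInf_le_opNorm (n : ℕ) : tailInf S n ≤ ‖S‖ := by
  obtain ⟨v, hv⟩ := unitTail_nonempty n
  calc tailInf S n ≤ ‖S v‖ := csInf_le (tailInf_image_bddBelow S n) (mem_image_of_mem _ hv)
    _ ≤ ‖S‖ := by simpa [hv.1] using S.le_opNorm v

theorem le_tailInf {c : ℝ} (hS : ∀ v, c * ‖v‖ ≤ ‖S v‖) (n : ℕ) : c ≤ tailInf S n :=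
  le_csInf ((unitTail_nonempty n).image _) <| forall_mem_image.2 fun v ⟨hv1, _⟩ => by
    simpa [hv1] using hS v

theorem exists_of_tailInf_lt {n : ℕ} {r : ℝ} (h : tailInf S n < r) :
    ∃ u ∈ unitTail n, ‖S u‖ < r := by
  simpa using exists_lt_of_csInf_lt ((unitTail_nonempty n).image _) h

end TailInf

theorem IsNormalizedBlockSeq.tailInf_mul_norm_le_blockMap {X : Type*} [NormedAddCommGroup X]
    [NormedSpace ℝ X] {N : ℕ → ℕ} {U : ℕ → ℓ¹(ℕ, ℝ)} (hB : IsNormalizedBlockSeq N U)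
    (S : ℓ¹(ℕ, ℝ) →L[ℝ] X) (v : ℓ¹(ℕ, ℝ)) :
    tailInf S (N 0) * ‖v‖ ≤ ‖S (hB.blockMap v)‖ := by
  rw [← hB.norm_blockMap v]
  have hclosed : IsClosed {w : ℓ¹(ℕ, ℝ) | tailInf S (N 0) * ‖w‖ ≤ ‖S w‖} :=
    isClosed_le (by fun_prop) (by fun_prop)
  exact hclosed.mem_of_tendsto (hB.hasSum_blockMap v).tendsto_sum_nat
    (Eventually.of_forall fun K => tailInf_mul_norm_le S (hB.support_sum_subset v K))

theorem exists_almost_isometry_of_bounded_below {X : Type*} [NormedAddCommGroup X]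
    [NormedSpace ℝ X] (S : ℓ¹(ℕ, ℝ) →L[ℝ] X) {c : ℝ} (hc : 0 < c) (hS : ∀ v, c * ‖v‖ ≤ ‖S v‖)
    {q : ℝ} (hq : 1 < q) :
    ∃ T : ℓ¹(ℕ, ℝ) →L[ℝ] X, ∀ v, ‖v‖ ≤ ‖T v‖ ∧ ‖T v‖ ≤ q * ‖v‖ := by
  obtain ⟨r, hr, rfl⟩ : ∃ r, 1 < r ∧ r ^ 2 = q :=
    ⟨√q, by rwa [Real.lt_sqrt zero_le_one, one_pow], Real.sq_sqrt (by linarith)⟩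
  set Λ := ⨆ n, tailInf S n
  have hbdd : BddAbove (range (tailInf S)) := ⟨‖S‖, forall_mem_range.2 (tailInf_le_opNorm S)⟩
  have hΛ : 0 < Λ := hc.trans_le ((le_tailInf S hS 0).trans (le_ciSup hbdd 0))
  obtain ⟨n₀, hn₀⟩ : ∃ n₀, Λ / r < tailInf S n₀ := exists_lt_of_lt_ciSup (div_lt_self hΛ hr)
  have hblocks (m : ℕ) : ∃ u ∈ unitTail m, ‖S u‖ < r * Λ :=
    exists_of_tailInf_lt S ((le_ciSup hbdd m).trans_lt (lt_mul_left hΛ hr))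
  obtain ⟨N, U, rfl, hB, hSU⟩ := exists_isNormalizedBlockSeq hblocks n₀
  set lam := tailInf S (N 0)
  have hlam : 0 < lam := hc.trans_le (le_tailInf S hS _)
  have hupper (v : ℓ¹(ℕ, ℝ)) : ‖S (hB.blockMap v)‖ ≤ r * Λ * ‖v‖ := by
    refine norm_le_of_hasSum_smul (fun k => (hSU k).le) ?_
    simpa only [comp_def, map_smul] using (hB.hasSum_blockMap v).map S S.continuous
  refine ⟨lam⁻¹ • S.comp hB.blockMap, fun v => ?_⟩
  rw [smul_apply, ContinuousLinearMap.comp_apply, norm_smul, norm_inv,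
    Real.norm_of_nonneg hlam.le, le_inv_mul_iff₀ hlam, inv_mul_le_iff₀ hlam]
  refine ⟨hB.tailInf_mul_norm_le_blockMap S v, (hupper v).trans ?_⟩
  rw [div_lt_iff₀ (by linarith)] at hn₀
  calc r * Λ * ‖v‖ ≤ r * (lam * r) * ‖v‖ := by gcongr
    _ = lam * (r ^ 2 * ‖v‖) := by ring

theorem james_l1_nondistortion_general
    {X : Type*} [NormedAddCommGroup X] [NormedSpace ℝ X]
    (Y : Submodule ℝ X)
    (e : lp (fun _ : ℕ => ℝ) 1 ≃L[ℝ] Y)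
    (ε : ℝ) (hε : 0 < ε) :
    ∃ T : lp (fun _ : ℕ => ℝ) 1 →L[ℝ] X,
      ∀ v, ‖v‖ ≤ ‖T v‖ ∧ ‖T v‖ ≤ (1 + ε) * ‖v‖ := by
  have hS (v : ℓ¹(ℕ, ℝ)) :
      ‖(e.symm : Y →L[ℝ] ℓ¹(ℕ, ℝ))‖⁻¹ * ‖v‖ ≤ ‖Y.subtypeL.comp (e : ℓ¹(ℕ, ℝ) →L[ℝ] Y) v‖ := by
    rw [inv_mul_le_iff₀ e.norm_symm_pos]
    simpa using (e.symm : Y →L[ℝ] ℓ¹(ℕ, ℝ)).le_opNorm (e v)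
  exact exists_almost_isometry_of_bounded_below _ (inv_pos.2 e.norm_symm_pos) hS
    (lt_add_of_pos_right 1 hε)

/-- James non-distortion, used form. If `X` contains an isomorphic
copy of `ℓ¹`, then for every `ε > 0` there is a linear embedding `T : ℓ¹ → X` with
`‖v‖₁ ≤ ‖T v‖ ≤ (1+ε)‖v‖₁` for all `v`. -/
theorem james_l1_nondistortion
    {X : Type*} [NormedAddCommGroup X] [NormedSpace ℝ X] [CompleteSpace X]
    (Y : Submodule ℝ X) (hY : IsClosed (Y : Set X))
    (e : lp (fun _ : ℕ => ℝ) 1 ≃L[ℝ] Y)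
    (ε : ℝ) (hε : 0 < ε) :
    ∃ T : lp (fun _ : ℕ => ℝ) 1 →L[ℝ] X,
      ∀ v, ‖v‖ ≤ ‖T v‖ ∧ ‖T v‖ ≤ (1 + ε) * ‖v‖ :=
  james_l1_nondistortion_general Y e ε hε
end
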